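/- Let q ≥ 2 and consider a Mahler equation p_{-1}(z) + p_0(z)f(z) + ... + p_n(z)f(z^{q^n}) = 0 with p_0 ≠ 0, and suppose d < 0, where d = max_{1≤i≤n, p_i ≠ 0} ⌊(ν_0 − ν_i)/(q^i − 1)⌋ with ν_i the z-adic valuation of p_i. Then a formal power series solution f, if it exists, is unique; moreover the solution f is the zero series if and only if p_{-1} = 0. -/

import Mathlib

open Polynomial PowerSeries

/-- Substitution `z ↦ z^m` in a formal power series. -/
noncomputable def psExpand (K : Type*) [Field K] (m : ℕ) (f : PowerSeries K) : PowerSeries K :=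
  PowerSeries.mk fun k => if m ∣ k then PowerSeries.coeff (k / m) f else 0

/-- `K(z)` acts on Laurent series via the Laurent expansion at the origin. -/
noncomputable instance {K : Type*} [Field K] : Algebra (RatFunc K) (LaurentSeries K) :=
  RingHom.toAlgebra (RatFunc.liftAlgHom (Algebra.ofId K[X] (LaurentSeries K))
    (nonZeroDivisors_le_comap_nonZeroDivisors_of_injective _
      (Polynomial.algebraMap_hahnSeries_injective ℤ))).toRingHom

lemma psExpand_coeff {K : Type*} [Field K] (m : ℕ) (f : PowerSeries K) (k : ℕ) :
    PowerSeries.coeff k (psExpand K m f) =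
      if m ∣ k then PowerSeries.coeff (k / m) f else 0 := by
  simp [psExpand]

lemma psExpand_sub {K : Type*} [Field K] (m : ℕ) (f g : PowerSeries K) :
    psExpand K m (f - g) = psExpand K m f - psExpand K m g := by
  ext k
  simp only [map_sub, psExpand_coeff]
  split <;> simp

lemma psExpand_zero {K : Type*} [Field K] (m : ℕ) : psExpand K m (0 : PowerSeries K) = 0 := by
  ext k; simp [psExpand_coeff]

lemma mahler_key {K : Type*} [Field K] (q n : ℕ) (hq : 2 ≤ q)
    (p : Fin (n + 1) → K[X]) (hp0 : p 0 ≠ 0)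
    (hν : ∀ i : Fin (n + 1), i ≠ 0 → p i ≠ 0 →
      (p 0).natTrailingDegree < (p i).natTrailingDegree)
    (h : PowerSeries K)
    (heq : ∑ i : Fin (n + 1), (p i : PowerSeries K) * psExpand K (q ^ (i : ℕ)) h = 0) :
    h = 0 := by
  set ν0 := (p 0).natTrailingDegree with hν0
  ext k
  induction k using Nat.strong_induction_on with
  | _ k IH =>
  simp only [map_zero] at IH ⊢
  have hco := congrArg (PowerSeries.coeff (ν0 + k)) heq
  rw [map_sum, map_zero] at hco
  have hrest : ∀ i : Fin (n + 1), i ∈ Finset.univ → i ≠ 0 →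
      PowerSeries.coeff (ν0 + k) ((p i : PowerSeries K) * psExpand K (q ^ (i : ℕ)) h) = 0 := by
    intro i _ hi
    rw [PowerSeries.coeff_mul]
    apply Finset.sum_eq_zero
    rintro ⟨a, b⟩ hab
    rw [Finset.HasAntidiagonal.mem_antidiagonal] at hab
    by_cases ha : a ≤ ν0
    · -- coeff a (p i) = 0 since a ≤ ν0 < ν_i (if p i ≠ 0); if p i = 0 trivial
      by_cases hpi : p i = 0
      · simp [hpi]
      · have : a < (p i).natTrailingDegree := lt_of_le_of_lt ha (hν i hi hpi)
        rw [Polynomial.coeff_coe, Polynomial.coeff_eq_zero_of_lt_natTrailingDegree this,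
          zero_mul]
    · have hb : b < k := by omega
      have : PowerSeries.coeff b (psExpand K (q ^ (i : ℕ)) h) = 0 := by
        rw [psExpand_coeff]
        split
        · exact IH _ (lt_of_le_of_lt (Nat.div_le_self _ _) hb)
        · rfl
      rw [this, mul_zero]
  rw [Finset.sum_eq_single_of_mem 0 (Finset.mem_univ _) hrest] at hco
  -- now the i = 0 term
  have hps1 : psExpand K (q ^ ((0 : Fin (n+1)) : ℕ)) h = h := by
    ext j
    simp [psExpand_coeff]
  rw [hps1, PowerSeries.coeff_mul,
    Finset.sum_eq_single_of_mem (ν0, k) (by rw [Finset.HasAntidiagonal.mem_antidiagonal])] at hco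
  · have htc : (p 0).coeff ν0 ≠ 0 := by
      rw [hν0]
      exact Polynomial.trailingCoeff_nonzero_iff_nonzero.mpr hp0
    rw [Polynomial.coeff_coe] at hco
    have := mul_eq_zero.mp hco
    simpa [htc] using this
  · rintro ⟨a, b⟩ hab hne
    rw [Finset.HasAntidiagonal.mem_antidiagonal] at hab
    rcases lt_trichotomy a ν0 with hlt | heqa | hgt
    · rw [Polynomial.coeff_coe, Polynomial.coeff_eq_zero_of_lt_natTrailingDegree hlt, zero_mul]
    · exfalso; apply hne; subst heqa; simp at hab ⊢; omega
    · have hb : b < k := by omega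
      rw [IH b hb, mul_zero]

/-- if the critical index `d = max_{i ≥ 1, p_i ≠ 0} ⌊(ν₀ - ν_i)/(q^i - 1)⌋` is
negative, then a power series solution of the Mahler equation is unique, and this solution is the
zero series if and only if `p₋₁ = 0`. -/
theorem mahler_solution_unique_of_neg_critical_index {K : Type*} [Field K] [CharZero K]
    (q n : ℕ) (hq : 2 ≤ q)
    (pneg : K[X]) (p : Fin (n + 1) → K[X]) (hp0 : p 0 ≠ 0)
    (hd : ∀ i : Fin (n + 1), i ≠ 0 → p i ≠ 0 →
      Int.fdiv (((p 0).natTrailingDegree : ℤ) - ((p i).natTrailingDegree : ℤ))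
        ((q : ℤ) ^ (i : ℕ) - 1) < 0) :
    (∀ f g : PowerSeries K,
      (pneg : PowerSeries K) +
        ∑ i : Fin (n + 1), (p i : PowerSeries K) * psExpand K (q ^ (i : ℕ)) f = 0 →
      (pneg : PowerSeries K) +
        ∑ i : Fin (n + 1), (p i : PowerSeries K) * psExpand K (q ^ (i : ℕ)) g = 0 →
      f = g) ∧
    (∀ f : PowerSeries K,
      (pneg : PowerSeries K) +
        ∑ i : Fin (n + 1), (p i : PowerSeries K) * psExpand K (q ^ (i : ℕ)) f = 0 →
      (f = 0 ↔ pneg = 0)) := by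
  have hν : ∀ i : Fin (n + 1), i ≠ 0 → p i ≠ 0 →
      (p 0).natTrailingDegree < (p i).natTrailingDegree := by
    intro i hi hpi
    have hd' := hd i hi hpi
    by_contra hle
    push_neg at hle
    have hb : (0 : ℤ) ≤ (q : ℤ) ^ (i : ℕ) - 1 := by
      have : (1 : ℤ) ≤ (q : ℤ) ^ (i : ℕ) :=
        one_le_pow₀ (by exact_mod_cast le_trans one_le_two hq)
      omega
    have ha : (0 : ℤ) ≤ ((p 0).natTrailingDegree : ℤ) - ((p i).natTrailingDegree : ℤ) := by
      exact_mod_cast sub_nonneg.mpr (Int.ofNat_le.mpr hle)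
    exact absurd (Int.fdiv_nonneg ha hb) (not_le.mpr hd')
  have uniq : ∀ f g : PowerSeries K,
      (pneg : PowerSeries K) +
        ∑ i : Fin (n + 1), (p i : PowerSeries K) * psExpand K (q ^ (i : ℕ)) f = 0 →
      (pneg : PowerSeries K) +
        ∑ i : Fin (n + 1), (p i : PowerSeries K) * psExpand K (q ^ (i : ℕ)) g = 0 →
      f = g := by
    intro f g hf hg
    have hsub : ∑ i : Fin (n + 1),
        (p i : PowerSeries K) * psExpand K (q ^ (i : ℕ)) (f - g) = 0 := by
      have := sub_eq_zero.mpr (hf.trans hg.symm)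
      rw [add_sub_add_left_eq_sub, ← Finset.sum_sub_distrib] at this
      rw [← this]
      apply Finset.sum_congr rfl
      intro i _
      rw [psExpand_sub, mul_sub]
    have := mahler_key q n hq p hp0 hν (f - g) hsub
    exact sub_eq_zero.mp this
  refine ⟨uniq, fun f hf => ?_⟩
  constructor
  · intro hf0
    subst hf0
    simpa [psExpand_zero, Polynomial.coe_eq_zero_iff] using hf
  · intro hpn
    subst hpn
    refine uniq f 0 hf ?_
    simp [psExpand_zero]
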